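/- For the action of G^T on the set X of marked-leaf classes, the pointwise stabiliser of a k-element subset A = {[t,1],…,[t,k]} (t a tree with k leaves) is isomorphic to G^k, via the map sending (f_i∘h_i^{-1})_{i=1}^k to (t∘f)∘(t∘h)^{-1} where f = (f_1,…,f_k) and h = (h_1,…,h_k); an element t∘f∘π∘(t∘h)^{-1} fixes every point of A iff π is trivial and the i-th trees of f and h have equal numbers of leaves for each i. -/

import Mathlib

/-!
A marked leaf `[s, j]` is pinned down by its position in common refinements: if `s ∘ p = s' ∘ p'`
and `[s, j] = [s', j']`, then `j^p = j'^{p'}`. This is independent of the refinement because, by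
Ore's property and left cancellativity, two refinements of the same pair of trees are refined by a
third one, and passing to a refinement acts on positions by a strictly monotone map. Consequently
`[t ∘ f, m] = [t, i]` iff `m = i^f`, so `t ∘ f ∘ π ∘ (t ∘ h)⁻¹` fixes `[t, 1], …, [t, k]` iff `π`
sends `i^h` to `i^f` for every `i`. For `i = 1` this forces `π = 1`, and then `i^f = i^h` for all
`i` says that the trees of `f` and `h` have equal leaf counts one by one. For the isomorphism,
cancelling `t` on the left turns equality of fractions over `t` into equality of fractions of
forests, which splits tree by tree.
-/

namespace ForestSkein

/-- A coloured finite rooted planar binary tree with colours in `S`. -/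
inductive CTree (S : Type) : Type
  | leaf : CTree S
  | node : S → CTree S → CTree S → CTree S

namespace CTree

/-- Number of leaves of a coloured binary tree. -/
def leaves {S : Type} : CTree S → ℕ
  | .leaf => 1
  | .node _ l r => leaves l + leaves r

/-- Graft a list of trees onto the leaves of a tree (vertical stacking). -/
def graft {S : Type} : CTree S → List (CTree S) → CTree S
  | .leaf, gs => gs.headD .leaf
  | .node c l r, gs => .node c (graft l (gs.take (leaves l))) (graft r (gs.drop (leaves l)))

/-- Relabel the colours of a tree along a map of colour sets. -/
def recolour {S S' : Type} (c : S → S') : CTree S → CTree S'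
  | .leaf => .leaf
  | .node x l r => .node (c x) (recolour c l) (recolour c r)

end CTree

/-- A coloured forest: a finite list of coloured binary trees.  Its roots are the
entries of the list, its leaves are the leaves of its trees. -/
abbrev Forest (S : Type) := List (CTree S)

/-- Total number of leaves of a forest. -/
def Forest.leaves {S : Type} (f : Forest S) : ℕ := (f.map CTree.leaves).sum

/-- Composition of forests: `Forest.comp f g` stacks `g` on top of `f`, attaching
the `j`-th root of `g` to the `j`-th leaf of `f` (meaningful when
`Forest.leaves f = g.length`). -/
def Forest.comp {S : Type} : Forest S → Forest S → Forest S
  | [], _ => []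
  | t :: ts, g =>
      CTree.graft t (g.take (CTree.leaves t)) :: Forest.comp ts (g.drop (CTree.leaves t))

/-- The elementary forest `a_{j,n}` (1-indexed) with `n` roots, a single `a`-coloured
caret at the `j`-th root, and all other trees trivial. -/
def elemForest {S : Type} (a : S) (j n : ℕ) : Forest S :=
  List.replicate (j - 1) CTree.leaf ++ [CTree.node a CTree.leaf CTree.leaf] ++
    List.replicate (n - j) CTree.leaf

/-- A set of skein relations consists of pairs of trees with equal numbers of leaves. -/
def LeafPres {S : Type} (R : CTree S → CTree S → Prop) : Prop :=
  ∀ t t' : CTree S, R t t' → CTree.leaves t = CTree.leaves t'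

/-- The equivalence relation on coloured forests generated by a set `R` of skein
relations (pairs of trees), closed under composition and tensor product
(horizontal juxtaposition).  The quotient is the forest-skein category
presented by `R`. -/
inductive SkeinEquiv {S : Type} (R : CTree S → CTree S → Prop) : Forest S → Forest S → Prop
  | of {t t' : CTree S} : R t t' → SkeinEquiv R [t] [t']
  | refl (f : Forest S) : SkeinEquiv R f f
  | symm {f g : Forest S} : SkeinEquiv R f g → SkeinEquiv R g f
  | trans {f g h : Forest S} : SkeinEquiv R f g → SkeinEquiv R g h → SkeinEquiv R f h
  | comp {f f' g g' : Forest S} :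
      SkeinEquiv R f f' → SkeinEquiv R g g' → SkeinEquiv R (Forest.comp f g) (Forest.comp f' g')
  | tensor {f f' g g' : Forest S} :
      SkeinEquiv R f f' → SkeinEquiv R g g' → SkeinEquiv R (f ++ g) (f' ++ g')

/-- Left-cancellativity of a forest-skein category given by the equivalence `E` on
forests: `f ∘ g = f ∘ h` implies `g = h`. -/
def LeftCancel {S : Type} (E : Forest S → Forest S → Prop) : Prop :=
  ∀ f g h : Forest S, Forest.leaves f = g.length → Forest.leaves f = h.length →
    E (Forest.comp f g) (Forest.comp f h) → E g h

/-- Ore's property for the forest-skein category given by the equivalence `E`: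
any two forests with the same number of roots admit a common right multiple. -/
def OreProp {S : Type} (E : Forest S → Forest S → Prop) : Prop :=
  ∀ f g : Forest S, f.length = g.length →
    ∃ p q : Forest S, Forest.leaves f = p.length ∧ Forest.leaves g = q.length ∧
      E (Forest.comp f p) (Forest.comp g q)

/-- Equality of the fractions `t ∘ s⁻¹` and `t' ∘ s'⁻¹` in the fraction group:
there are forests `f, f'` with `t ∘ f = t' ∘ f'` and `s ∘ f = s' ∘ f'` modulo `E`. -/
def FracRel {S : Type} (E : Forest S → Forest S → Prop) (t s t' s' : CTree S) : Prop :=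
  ∃ f f' : Forest S, CTree.leaves t = f.length ∧ CTree.leaves t' = f'.length ∧
    E [CTree.graft t f] [CTree.graft t' f'] ∧ E [CTree.graft s f] [CTree.graft s' f']

/-- `leafPos f j` is the (0-indexed) index `j^f` of the first leaf of the `j`-th tree
of the forest `f` among all leaves of `f`. -/
def leafPos {S : Type} (f : Forest S) (j : ℕ) : ℕ := Forest.leaves (f.take j)

/-- Generating relation for the set `X` of marked-leaf classes `[t, j]`:
skein equivalence of the underlying trees, and growth `(t, j) ~ (t ∘ f, j^f)`. -/
inductive MLRel {S : Type} (E : Forest S → Forest S → Prop) :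
    CTree S × ℕ → CTree S × ℕ → Prop
  | skein {t t' : CTree S} {j : ℕ} : E [t] [t'] → MLRel E (t, j) (t', j)
  | grow (t : CTree S) (f : Forest S) (j : ℕ) (hf : CTree.leaves t = f.length) :
      MLRel E (t, j) (CTree.graft t f, leafPos f j)

/-- Equality of marked-leaf classes in `X`. -/
def MLEquiv {S : Type} (E : Forest S → Forest S → Prop) :
    CTree S × ℕ → CTree S × ℕ → Prop :=
  Relation.EqvGen (MLRel E)

/-- The total order `⪯` on marked leaves: `[t, j] ⪯ [t', j']` when for some pair of
forests with `t ∘ f = t' ∘ f'` (modulo `E`) one has `j^f ≤ j'^{f'}`. -/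
def MLLe {S : Type} (E : Forest S → Forest S → Prop) (p q : CTree S × ℕ) : Prop :=
  ∃ f f' : Forest S, CTree.leaves p.1 = f.length ∧ CTree.leaves q.1 = f'.length ∧
    E [CTree.graft p.1 f] [CTree.graft q.1 f'] ∧ leafPos f p.2 ≤ leafPos f' q.2

open CTree

variable {S : Type}

theorem CTree.one_le_leaves (t : CTree S) : 1 ≤ t.leaves := by
  induction t with
  | leaf => exact le_rfl
  | node _ l r _ _ => simp only [leaves]; omega

namespace Forest

@[simp] theorem leaves_nil : Forest.leaves ([] : Forest S) = 0 := rfl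

@[simp] theorem leaves_cons (t : CTree S) (f : Forest S) :
    Forest.leaves (t :: f) = t.leaves + Forest.leaves f := by
  simp [Forest.leaves]

@[simp] theorem leaves_append (f g : Forest S) :
    Forest.leaves (f ++ g) = Forest.leaves f + Forest.leaves g := by
  simp [Forest.leaves]

@[simp] theorem leaves_singleton (t : CTree S) : Forest.leaves [t] = t.leaves := by
  simp [Forest.leaves]

theorem leaves_take_add_leaves_drop (g : Forest S) (n : ℕ) :
    Forest.leaves (g.take n) + Forest.leaves (g.drop n) = Forest.leaves g := by
  rw [← leaves_append, List.take_append_drop]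

theorem leaves_take_add (g : Forest S) (m n : ℕ) :
    Forest.leaves (g.take (m + n)) =
      Forest.leaves (g.take m) + Forest.leaves ((g.drop m).take n) := by
  rw [List.take_add, leaves_append]

end Forest

theorem CTree.graft_take (t : CTree S) (g : Forest S) :
    graft t (g.take t.leaves) = graft t g := by
  induction t generalizing g with
  | leaf => cases g <;> simp [graft, leaves]
  | node c l r _ ihr =>
    simp only [graft, leaves, List.take_take, List.drop_take]
    rw [min_eq_left (Nat.le_add_right _ _), Nat.add_sub_cancel_left, ihr]

theorem CTree.leaves_graft (t : CTree S) (g : Forest S) :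
    (graft t g).leaves = Forest.leaves (g.take t.leaves) + (t.leaves - g.length) := by
  induction t generalizing g with
  | leaf => cases g <;> simp [graft, leaves, Forest.leaves]
  | node c l r ihl ihr =>
    simp only [graft, leaves, ihl, ihr, List.take_take, min_self, Forest.leaves_take_add,
      List.length_take, List.length_drop]
    omega

theorem CTree.leaves_graft_of_length {t : CTree S} {g : Forest S} (h : t.leaves = g.length) :
    (graft t g).leaves = Forest.leaves g := by
  rw [leaves_graft, h, List.take_length, Nat.sub_self, add_zero]

theorem CTree.leaves_graft_congr {t t' : CTree S} {g g' : Forest S} (ht : t.leaves = t'.leaves)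
    (hg : g.map leaves = g'.map leaves) : (graft t g).leaves = (graft t' g').leaves := by
  have hlen : g.length = g'.length := by simpa using congrArg List.length hg
  rw [leaves_graft, leaves_graft, ht, hlen]
  unfold Forest.leaves
  rw [List.map_take, List.map_take, hg]

theorem CTree.graft_replicate_leaf (t : CTree S) (n : ℕ) :
    graft t (List.replicate n leaf) = t := by
  induction t generalizing n with
  | leaf => cases n <;> simp [graft, List.replicate_succ]
  | node c l r ihl ihr => simp [graft, List.take_replicate, List.drop_replicate, ihl, ihr]

namespace Forest

@[simp] theorem length_comp (f g : Forest S) : (comp f g).length = f.length := by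
  induction f generalizing g with
  | nil => rfl
  | cons t ts ih => simp [comp, ih]

theorem comp_take (f g : Forest S) (n : ℕ) :
    (comp f g).take n = comp (f.take n) (g.take (Forest.leaves (f.take n))) := by
  induction f generalizing g n with
  | nil => simp [comp]
  | cons t ts ih =>
    cases n with
    | zero => simp [comp]
    | succ m =>
      simp only [comp, List.take_succ_cons, leaves_cons, ih, List.take_take, List.drop_take]
      rw [min_eq_left (Nat.le_add_right _ _), Nat.add_sub_cancel_left]

theorem comp_drop (f g : Forest S) (n : ℕ) :
    (comp f g).drop n = comp (f.drop n) (g.drop (Forest.leaves (f.take n))) := by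
  induction f generalizing g n with
  | nil => simp [comp]
  | cons t ts ih =>
    cases n with
    | zero => simp [comp, Forest.leaves]
    | succ m => simp only [comp, List.drop_succ_cons, List.take_succ_cons, leaves_cons, ih,
        List.drop_drop]

theorem comp_singleton (t : CTree S) (p : Forest S) : comp [t] p = [graft t p] := by
  simp only [comp, graft_take]

theorem leaves_comp_of_length {f g : Forest S} (h : Forest.leaves f = g.length) :
    Forest.leaves (comp f g) = Forest.leaves g := by
  induction f generalizing g with
  | nil => cases g <;> simp_all [comp]
  | cons t ts ih =>
    rw [leaves_cons] at h
    rw [comp, leaves_cons, leaves_graft_of_length (by rw [List.length_take]; omega),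
      ih (by rw [List.length_drop]; omega), leaves_take_add_leaves_drop]

theorem map_leaves_comp_congr {f f' g g' : Forest S}
    (hf : f.map CTree.leaves = f'.map CTree.leaves)
    (hg : g.map CTree.leaves = g'.map CTree.leaves) :
    (comp f g).map CTree.leaves = (comp f' g').map CTree.leaves := by
  induction f generalizing f' g g' with
  | nil => cases f' <;> simp_all [comp]
  | cons t ts ih =>
    cases f' with
    | nil => simp at hf
    | cons t' ts' =>
      simp only [List.map_cons, List.cons.injEq] at hf
      simp only [comp, List.map_cons, List.cons.injEq, hf.1]
      exact ⟨leaves_graft_congr hf.1 (by simp only [List.map_take, hg]),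
        ih hf.2 (by simp only [List.map_drop, hg])⟩

end Forest

theorem CTree.graft_graft {t : CTree S} {f : Forest S} (h : t.leaves = f.length) (p : Forest S) :
    graft (graft t f) p = graft t (Forest.comp f p) := by
  induction t generalizing f p with
  | leaf =>
    match f, h with
    | [f0], _ => simp [graft, Forest.comp_singleton]
  | node c l r ihl ihr =>
    simp only [leaves] at h
    have hl : l.leaves = (f.take l.leaves).length := by rw [List.length_take]; omega
    have hr : r.leaves = (f.drop l.leaves).length := by rw [List.length_drop]; omega
    simp only [graft]
    rw [leaves_graft_of_length hl, ihl hl, ihr hr, Forest.comp_take, Forest.comp_drop]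

@[simp] theorem leafPos_zero (f : Forest S) : leafPos f 0 = 0 := rfl

theorem leafPos_succ {f : Forest S} {i : ℕ} (hi : i < f.length) :
    leafPos f (i + 1) = leafPos f i + (f.getD i leaf).leaves := by
  rw [leafPos, leafPos, ← List.take_concat_get hi, List.concat_eq_append, Forest.leaves_append,
    Forest.leaves_singleton, List.getD_eq_getElem _ _ hi]

theorem leafPos_mono (f : Forest S) : Monotone (leafPos f) := by
  intro i j hij
  obtain ⟨d, rfl⟩ := Nat.exists_eq_add_of_le hij
  rw [leafPos, leafPos, Forest.leaves_take_add]
  omega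

theorem leafPos_le_leaves (f : Forest S) (i : ℕ) : leafPos f i ≤ Forest.leaves f :=
  Forest.leaves_take_add_leaves_drop f i ▸ Nat.le_add_right _ _

theorem leafPos_length (f : Forest S) : leafPos f f.length = Forest.leaves f := by
  rw [leafPos, List.take_length]

theorem leafPos_strictMonoOn (f : Forest S) : StrictMonoOn (leafPos f) (Set.Iic f.length) := by
  intro i _ j hj hij
  calc leafPos f i < leafPos f (i + 1) := by
        have := one_le_leaves (f.getD i leaf)
        rw [leafPos_succ (lt_of_lt_of_le hij hj)]
        omega
    _ ≤ leafPos f j := leafPos_mono f hij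

theorem leafPos_lt_leaves {f : Forest S} {i : ℕ} (hi : i < f.length) :
    leafPos f i < Forest.leaves f :=
  leafPos_length f ▸ leafPos_strictMonoOn f hi.le (Set.mem_Iic.2 le_rfl) hi

theorem leafPos_eq_of_map_leaves_eq {f g : Forest S} (h : f.map leaves = g.map leaves) (i : ℕ) :
    leafPos f i = leafPos g i := by
  rw [leafPos, leafPos, Forest.leaves, Forest.leaves, List.map_take, List.map_take, h]

theorem leafPos_comp {f g : Forest S} (hg : Forest.leaves f ≤ g.length) (i : ℕ) :
    leafPos (Forest.comp f g) i = leafPos g (leafPos f i) := by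
  have hi := leafPos_le_leaves f i
  rw [leafPos, Forest.comp_take, Forest.leaves_comp_of_length]
  · rfl
  · rw [List.length_take]
    exact (min_eq_left (hi.trans hg)).symm

theorem leafPos_replicate_leaf (n j : ℕ) :
    leafPos (List.replicate n (leaf : CTree S)) j = min j n := by
  simp [leafPos, List.take_replicate, Forest.leaves, leaves]

theorem map_leaves_eq_of_getD {f h : Forest S} (hlen : f.length = h.length)
    (H : ∀ i < f.length, (f.getD i leaf).leaves = (h.getD i leaf).leaves) :
    f.map leaves = h.map leaves := by
  refine List.ext_getElem (by simpa using hlen) fun i hi _ => ?_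
  rw [List.length_map] at hi
  have := H i hi
  rw [List.getD_eq_getElem _ _ hi, List.getD_eq_getElem _ _ (hlen ▸ hi)] at this
  simpa using this

variable {R : CTree S → CTree S → Prop}

namespace SkeinEquiv

theorem map_leaves_eq (hR : LeafPres R) {f g : Forest S} (h : SkeinEquiv R f g) :
    f.map leaves = g.map leaves := by
  induction h with
  | of hr => simp [hR _ _ hr]
  | refl => rfl
  | symm _ ih => exact ih.symm
  | trans _ _ ih₁ ih₂ => exact ih₁.trans ih₂
  | comp _ _ ih₁ ih₂ => exact Forest.map_leaves_comp_congr ih₁ ih₂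
  | tensor _ _ ih₁ ih₂ => simp only [List.map_append, ih₁, ih₂]

theorem length_eq (hR : LeafPres R) {f g : Forest S} (h : SkeinEquiv R f g) :
    f.length = g.length := by
  simpa using congrArg List.length (h.map_leaves_eq hR)

theorem leaves_eq_of_singleton (hR : LeafPres R) {t t' : CTree S} (h : SkeinEquiv R [t] [t']) :
    t.leaves = t'.leaves := by
  simpa using h.map_leaves_eq hR

theorem take_drop (hR : LeafPres R) {f g : Forest S} (h : SkeinEquiv R f g) (n : ℕ) :
    SkeinEquiv R (f.take n) (g.take n) ∧ SkeinEquiv R (f.drop n) (g.drop n) := by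
  induction h generalizing n with
  | of hr =>
    cases n with
    | zero => exact ⟨.refl _, .of hr⟩
    | succ m => simpa using ⟨SkeinEquiv.of hr, SkeinEquiv.refl []⟩
  | refl f => exact ⟨.refl _, .refl _⟩
  | symm _ ih => exact ⟨(ih n).1.symm, (ih n).2.symm⟩
  | trans _ _ ih₁ ih₂ => exact ⟨(ih₁ n).1.trans (ih₂ n).1, (ih₁ n).2.trans (ih₂ n).2⟩
  | comp h₁ _ ih₁ ih₂ =>
    rw [Forest.comp_take, Forest.comp_take, Forest.comp_drop, Forest.comp_drop,
      ← leafPos, ← leafPos, leafPos_eq_of_map_leaves_eq (h₁.map_leaves_eq hR)]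
    exact ⟨.comp (ih₁ n).1 (ih₂ _).1, .comp (ih₁ n).2 (ih₂ _).2⟩
  | tensor h₁ _ ih₁ ih₂ =>
    rw [List.take_append, List.take_append, List.drop_append, List.drop_append,
      h₁.length_eq hR]
    exact ⟨.tensor (ih₁ n).1 (ih₂ _).1, .tensor (ih₁ n).2 (ih₂ _).2⟩

theorem cons_iff (hR : LeafPres R) {a b : CTree S} {as bs : Forest S} :
    SkeinEquiv R (a :: as) (b :: bs) ↔ SkeinEquiv R [a] [b] ∧ SkeinEquiv R as bs :=
  ⟨fun h => by simpa using h.take_drop hR 1, fun h => h.1.tensor h.2⟩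

theorem graft_right (t : CTree S) {p q : Forest S} (h : SkeinEquiv R p q) :
    SkeinEquiv R [graft t p] [graft t q] := by
  simpa only [Forest.comp_singleton] using (SkeinEquiv.refl [t]).comp h

theorem graft_left {s s' : CTree S} (h : SkeinEquiv R [s] [s']) (u : Forest S) :
    SkeinEquiv R [graft s u] [graft s' u] := by
  simpa only [Forest.comp_singleton] using h.comp (.refl u)

theorem graft_graft_of_comp {s : CTree S} {p w u v : Forest S} (hp : s.leaves = p.length)
    (hw : s.leaves = w.length) (h : SkeinEquiv R (Forest.comp p u) (Forest.comp w v)) :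
    SkeinEquiv R [graft (graft s p) u] [graft (graft s w) v] := by
  rw [graft_graft hp, graft_graft hw]
  exact h.graft_right s

end SkeinEquiv

theorem skeinEquiv_graft_iff (hLC : LeftCancel (SkeinEquiv R)) {t : CTree S} {p q : Forest S}
    (hp : t.leaves = p.length) (hq : t.leaves = q.length) :
    SkeinEquiv R [graft t p] [graft t q] ↔ SkeinEquiv R p q := by
  refine ⟨fun h => hLC [t] p q (by simpa) (by simpa) ?_, SkeinEquiv.graft_right t⟩
  rwa [Forest.comp_singleton, Forest.comp_singleton]

theorem leaves_eq_of_skeinEquiv_graft (hR : LeafPres R) {s s' : CTree S} {p p' : Forest S}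
    (hp : s.leaves = p.length) (hp' : s'.leaves = p'.length)
    (h : SkeinEquiv R [graft s p] [graft s' p']) : Forest.leaves p = Forest.leaves p' := by
  rw [← leaves_graft_of_length hp, ← leaves_graft_of_length hp']
  exact h.leaves_eq_of_singleton hR

theorem leafPos_comp_eq_of_skeinEquiv (hR : LeafPres R) {p u w v : Forest S}
    (hu : Forest.leaves p = u.length) (hv : Forest.leaves w = v.length)
    (h : SkeinEquiv R (Forest.comp p u) (Forest.comp w v)) (j : ℕ) :
    leafPos u (leafPos p j) = leafPos v (leafPos w j) := by
  rw [← leafPos_comp hu.le, ← leafPos_comp hv.le]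
  exact leafPos_eq_of_map_leaves_eq (h.map_leaves_eq hR) j

/-- `x` and `y` mark the same leaf of some common refinement of their trees. -/
def MLMatch (R : CTree S → CTree S → Prop) (x y : CTree S × ℕ) : Prop :=
  ∃ p p' : Forest S, x.1.leaves = p.length ∧ y.1.leaves = p'.length ∧
    SkeinEquiv R [graft x.1 p] [graft y.1 p'] ∧ leafPos p x.2 = leafPos p' y.2

namespace MLMatch

theorem refl (x : CTree S × ℕ) : MLMatch R x x :=
  ⟨List.replicate x.1.leaves leaf, List.replicate x.1.leaves leaf, by simp, by simp,
    .refl _, rfl⟩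

theorem symm {x y : CTree S × ℕ} (h : MLMatch R x y) : MLMatch R y x :=
  let ⟨p, p', hp, hp', E, hpos⟩ := h
  ⟨p', p, hp', hp, E.symm, hpos.symm⟩

theorem trans (hR : LeafPres R) (hOre : OreProp (SkeinEquiv R)) {x y z : CTree S × ℕ}
    (hxy : MLMatch R x y) (hyz : MLMatch R y z) : MLMatch R x z := by
  obtain ⟨p, p', hp, hp', Ep, hpos⟩ := hxy
  obtain ⟨w', w'', hw', hw'', Ew, hwpos⟩ := hyz
  obtain ⟨u, v, hu, hv, Euv⟩ := hOre p' w' (hp'.symm.trans hw')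
  have hpp' := leaves_eq_of_skeinEquiv_graft hR hp hp' Ep
  have hww' := leaves_eq_of_skeinEquiv_graft hR hw' hw'' Ew
  refine ⟨Forest.comp p u, Forest.comp w'' v, by rw [Forest.length_comp, hp],
    by rw [Forest.length_comp, hw''], ?_, ?_⟩
  · rw [← graft_graft hp, ← graft_graft hw'']
    exact (Ep.graft_left u).trans ((Euv.graft_graft_of_comp hp' hw').trans (Ew.graft_left v))
  · rw [leafPos_comp (hpp'.trans hu).le, leafPos_comp (hww'.symm.trans hv).le, hpos,
      leafPos_comp_eq_of_skeinEquiv hR hu hv Euv, hwpos]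

theorem leafPos_eq (hR : LeafPres R) (hLC : LeftCancel (SkeinEquiv R))
    (hOre : OreProp (SkeinEquiv R)) {x y : CTree S × ℕ} (hxy : MLMatch R x y)
    {w w' : Forest S} (hw : x.1.leaves = w.length) (hw' : y.1.leaves = w'.length)
    (Ew : SkeinEquiv R [graft x.1 w] [graft y.1 w']) : leafPos w x.2 = leafPos w' y.2 := by
  obtain ⟨p, p', hp, hp', Ep, hpos⟩ := hxy
  obtain ⟨u, v, hu, hv, Euv⟩ := hOre p w (hp.symm.trans hw)
  have Euv' : SkeinEquiv R (Forest.comp p' u) (Forest.comp w' v) := by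
    have := (Ep.graft_left u).symm.trans ((Euv.graft_graft_of_comp hp hw).trans (Ew.graft_left v))
    rwa [graft_graft hp', graft_graft hw', skeinEquiv_graft_iff hLC (by simpa using hp')
      (by simpa using hw')] at this
  have hpp' := leaves_eq_of_skeinEquiv_graft hR hp hp' Ep
  have hww' := leaves_eq_of_skeinEquiv_graft hR hw hw' Ew
  refine (leafPos_strictMonoOn v).injOn (hv ▸ leafPos_le_leaves w _)
    (hv ▸ hww' ▸ leafPos_le_leaves w' _) ?_
  calc leafPos v (leafPos w x.2) = leafPos u (leafPos p x.2) :=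
        (leafPos_comp_eq_of_skeinEquiv hR hu hv Euv x.2).symm
    _ = leafPos u (leafPos p' y.2) := by rw [hpos]
    _ = leafPos v (leafPos w' y.2) :=
        leafPos_comp_eq_of_skeinEquiv hR (hpp' ▸ hu) (hww' ▸ hv) Euv' y.2

end MLMatch

theorem MLRel.mlMatch (hR : LeafPres R) {x y : CTree S × ℕ} (h : MLRel (SkeinEquiv R) x y) :
    MLMatch R x y := by
  cases h with
  | @skein t t' _ hE =>
    refine ⟨List.replicate t.leaves leaf, List.replicate t'.leaves leaf, by simp, by simp, ?_, ?_⟩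
    · rwa [graft_replicate_leaf, graft_replicate_leaf]
    · rw [leafPos_replicate_leaf, leafPos_replicate_leaf, hE.leaves_eq_of_singleton hR]
  | grow t f j hf =>
    refine ⟨f, List.replicate (graft t f).leaves leaf, hf, by simp,
      by rw [graft_replicate_leaf]; exact .refl _, ?_⟩
    rw [leafPos_replicate_leaf, leaves_graft_of_length hf, min_eq_left (leafPos_le_leaves f j)]

theorem MLEquiv.mlMatch (hR : LeafPres R) (hOre : OreProp (SkeinEquiv R)) {x y : CTree S × ℕ}
    (h : MLEquiv (SkeinEquiv R) x y) : MLMatch R x y := by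
  induction h with
  | rel _ _ h => exact h.mlMatch hR
  | refl x => exact .refl x
  | symm _ _ _ ih => exact ih.symm
  | trans _ _ _ _ _ ih₁ ih₂ => exact ih₁.trans hR hOre ih₂

theorem mlEquiv_graft_iff (hR : LeafPres R) (hLC : LeftCancel (SkeinEquiv R))
    (hOre : OreProp (SkeinEquiv R)) {t : CTree S} {f : Forest S} (hf : t.leaves = f.length)
    {m : ℕ} (hm : m ≤ Forest.leaves f) (i : ℕ) :
    MLEquiv (SkeinEquiv R) (graft t f, m) (t, i) ↔ m = leafPos f i := by
  refine ⟨fun h => ?_, ?_⟩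
  · have := (h.mlMatch hR hOre).leafPos_eq hR hLC hOre (w := List.replicate (Forest.leaves f) leaf)
      (by simp [leaves_graft_of_length hf]) hf (by rw [graft_replicate_leaf]; exact .refl _)
    rwa [leafPos_replicate_leaf, min_eq_left hm] at this
  · rintro rfl
    exact .symm _ _ (.rel _ _ (.grow t f i hf))

/-- Equality of the fractions `f ∘ h⁻¹` and `f' ∘ h'⁻¹` of forests, as `FracRel` for trees. -/
def ForestFracRel (E : Forest S → Forest S → Prop) (f h f' h' : Forest S) : Prop :=
  ∃ F F' : Forest S, Forest.leaves f = F.length ∧ Forest.leaves f' = F'.length ∧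
    E (Forest.comp f F) (Forest.comp f' F') ∧ E (Forest.comp h F) (Forest.comp h' F')

theorem fracRel_graft_iff (hLC : LeftCancel (SkeinEquiv R)) {t : CTree S} {f h f' h' : Forest S}
    (hf : t.leaves = f.length) (hh : t.leaves = h.length) (hf' : t.leaves = f'.length)
    (hh' : t.leaves = h'.length) :
    FracRel (SkeinEquiv R) (graft t f) (graft t h) (graft t f') (graft t h') ↔
      ForestFracRel (SkeinEquiv R) f h f' h' := by
  refine exists₂_congr fun F F' => ?_
  rw [leaves_graft_of_length hf, leaves_graft_of_length hf', graft_graft hf, graft_graft hf',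
    graft_graft hh, graft_graft hh', skeinEquiv_graft_iff hLC (by simpa) (by simpa),
    skeinEquiv_graft_iff hLC (by simpa) (by simpa)]

theorem forestFracRel_cons_iff (hR : LeafPres R) {a b a' b' : CTree S} {as bs as' bs' : Forest S}
    (hab : a.leaves = b.leaves) (hab' : a'.leaves = b'.leaves) :
    ForestFracRel (SkeinEquiv R) (a :: as) (b :: bs) (a' :: as') (b' :: bs') ↔
      FracRel (SkeinEquiv R) a b a' b' ∧ ForestFracRel (SkeinEquiv R) as bs as' bs' := by
  simp only [ForestFracRel, FracRel, Forest.comp, Forest.leaves_cons]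
  rw [← hab, ← hab']
  constructor
  · rintro ⟨F, F', hF, hF', E₁, E₂⟩
    obtain ⟨E₁, E₁'⟩ := (SkeinEquiv.cons_iff hR).1 E₁
    obtain ⟨E₂, E₂'⟩ := (SkeinEquiv.cons_iff hR).1 E₂
    exact ⟨⟨F.take a.leaves, F'.take a'.leaves, by simp; omega, by simp; omega, E₁, E₂⟩,
      F.drop a.leaves, F'.drop a'.leaves, by simp; omega, by simp; omega, E₁', E₂'⟩
  · rintro ⟨⟨g, g', hg, hg', E₁, E₂⟩, G, G', hG, hG', E₁', E₂'⟩
    refine ⟨g ++ G, g' ++ G', by simp [hg, hG], by simp [hg', hG'], ?_⟩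
    simp only [hg, hg', List.take_left, List.drop_left]
    exact ⟨E₁.tensor E₁', E₂.tensor E₂'⟩

theorem forestFracRel_iff_forall (hR : LeafPres R) {f h f' h' : Forest S}
    (hff' : f.length = f'.length) (hfh : f.map leaves = h.map leaves)
    (hfh' : f'.map leaves = h'.map leaves) :
    ForestFracRel (SkeinEquiv R) f h f' h' ↔ ∀ i < f.length,
      FracRel (SkeinEquiv R) (f.getD i leaf) (h.getD i leaf) (f'.getD i leaf) (h'.getD i leaf) := by
  induction f generalizing h f' h' with
  | nil =>
    obtain rfl : f' = [] := List.length_eq_zero_iff.mp hff'.symm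
    obtain rfl : h = [] := by simpa using hfh.symm
    obtain rfl : h' = [] := by simpa using hfh'.symm
    simpa using ⟨[], [], rfl, rfl, .refl _, .refl _⟩
  | cons a as ih =>
    obtain ⟨a', as', rfl⟩ := List.exists_cons_of_length_eq_add_one hff'.symm
    obtain ⟨b, bs, rfl, hab, has⟩ := List.map_eq_cons_iff.mp hfh.symm
    obtain ⟨b', bs', rfl, hab', has'⟩ := List.map_eq_cons_iff.mp hfh'.symm
    rw [forestFracRel_cons_iff hR hab.symm hab'.symm, ih (by simpa using hff') has.symm has'.symm,
      List.length_cons, Nat.forall_lt_succ_left]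
    simp only [List.getD_cons_zero, List.getD_cons_succ]

theorem leafPos_rotate_eq_iff {f h : Forest S} {k c : ℕ} (hf : f.length = k) (hh : h.length = k)
    (hk : 1 ≤ k) (hN : Forest.leaves f = Forest.leaves h) :
    (∀ i < k, (leafPos h i + c) % Forest.leaves h = leafPos f i) ↔
      c % Forest.leaves h = 0 ∧ ∀ i < k, (f.getD i leaf).leaves = (h.getD i leaf).leaves := by
  have hrot : c % Forest.leaves h = 0 →
      ∀ i < k, (leafPos h i + c) % Forest.leaves h = leafPos h i := by
    intro hc i hi
    rw [← Nat.add_mod_mod, hc, add_zero, Nat.mod_eq_of_lt (leafPos_lt_leaves (hh ▸ hi))]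
  constructor
  · intro hfix
    have hc : c % Forest.leaves h = 0 := by simpa using hfix 0 hk
    have hpos : ∀ i ≤ k, leafPos f i = leafPos h i := by
      intro i hi
      rcases hi.lt_or_eq with hi | rfl
      · rw [← hfix i hi, hrot hc i hi]
      · rw [← hf, leafPos_length, hN, hf, ← hh, leafPos_length]
    refine ⟨hc, fun i hi => ?_⟩
    have := leafPos_succ (hf ▸ hi)
    have := leafPos_succ (hh ▸ hi)
    have := hpos i hi.le
    have := hpos (i + 1) hi
    omega
  · rintro ⟨hc, hleaves⟩ i hi
    rw [hrot hc i hi,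
      leafPos_eq_of_map_leaves_eq (map_leaves_eq_of_getD (hf.trans hh.symm) (hf ▸ hleaves))]

/-- for `A = {[t,1], …, [t,k]}` (with `t` a tree with `k` leaves), an
element `(t∘f) ∘ π ∘ (t∘h)⁻¹` of `G^T` (with `π` the cyclic rotation by `c`) fixes
every point of `A` if and only if `π` is trivial and the `i`-th trees of `f` and
`h` have equal numbers of leaves for each `i`; moreover the pointwise stabiliser
of `A` is isomorphic to `G^k` via `(f_i ∘ h_i⁻¹)_i ↦ (t∘f) ∘ (t∘h)⁻¹`. -/
theorem pointwise_stabiliser {S : Type} (R : CTree S → CTree S → Prop)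
    (hR : LeafPres R)
    (hLC : LeftCancel (SkeinEquiv R)) (hOre : OreProp (SkeinEquiv R))
    (k : ℕ) (hk : 1 ≤ k) (t : CTree S) (ht : CTree.leaves t = k)
    (f h : Forest S) (hf : f.length = k) (hh : h.length = k)
    (hN : CTree.leaves (CTree.graft t f) = CTree.leaves (CTree.graft t h)) (c : ℕ) :
    ((∀ i : ℕ, i < k →
        MLEquiv (SkeinEquiv R)
          (CTree.graft t f, (leafPos h i + c) % CTree.leaves (CTree.graft t h)) (t, i)) ↔
      (c % CTree.leaves (CTree.graft t h) = 0 ∧ ∀ i : ℕ, i < k →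
        CTree.leaves (f.getD i CTree.leaf) = CTree.leaves (h.getD i CTree.leaf)))
    ∧ (∀ f' h' : Forest S, f'.length = k → h'.length = k →
        (∀ i : ℕ, i < k →
          CTree.leaves (f.getD i CTree.leaf) = CTree.leaves (h.getD i CTree.leaf)) →
        (∀ i : ℕ, i < k →
          CTree.leaves (f'.getD i CTree.leaf) = CTree.leaves (h'.getD i CTree.leaf)) →
        (FracRel (SkeinEquiv R) (CTree.graft t f) (CTree.graft t h)
            (CTree.graft t f') (CTree.graft t h') ↔
          ∀ i : ℕ, i < k →
            FracRel (SkeinEquiv R) (f.getD i CTree.leaf) (h.getD i CTree.leaf)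
              (f'.getD i CTree.leaf) (h'.getD i CTree.leaf))) := by
  have htf : t.leaves = f.length := ht.trans hf.symm
  have hth : t.leaves = h.length := ht.trans hh.symm
  have hNh : (graft t h).leaves = Forest.leaves h := leaves_graft_of_length hth
  have hNf : Forest.leaves f = Forest.leaves h :=
    (leaves_graft_of_length htf).symm.trans (hN.trans hNh)
  have hpos : 0 < Forest.leaves h := by simpa using leafPos_lt_leaves (f := h) (i := 0) (by omega)
  refine ⟨?_, fun f' h' hf' hh' hfh hfh' => ?_⟩
  · rw [hNh, ← leafPos_rotate_eq_iff hf hh hk hNf]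
    exact forall₂_congr fun i _ =>
      mlEquiv_graft_iff hR hLC hOre htf (hNf.symm ▸ (Nat.mod_lt _ hpos).le) i
  · rw [fracRel_graft_iff hLC htf hth (ht.trans hf'.symm) (ht.trans hh'.symm),
      forestFracRel_iff_forall hR (hf.trans hf'.symm)
        (map_leaves_eq_of_getD (hf.trans hh.symm) (hf ▸ hfh))
        (map_leaves_eq_of_getD (hf'.trans hh'.symm) (hf' ▸ hfh')), hf]

end ForestSkein
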